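/- arXiv:2102.09848 — 3 statements merged into one kernel-verified Lean document; each statement's English description precedes it below -/
import Mathlib

section
/- Let P be a Z^n-invariant d-partition of Z^n. Then every block S of P is either d-sparse, or of the form S = v + L for some v in Z^n and some sublattice L of Z^n with {0} ⊊ L ⊊ Z^n. -/
open Set

variable {n : ℕ}

/-- The ztranslate `u + S` of a subset `S ⊆ ℤⁿ`. -/
def ztranslate (u : Fin n → ℤ) (S : Set (Fin n → ℤ)) : Set (Fin n → ℤ) :=
  (fun x => u + x) '' S

/-- A collection of subsets of `ℤⁿ` is `ℤⁿ`-invariant if it is preserved by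
all translations. -/
def ZInvariant (P : Set (Set (Fin n → ℤ))) : Prop :=
  ∀ u : Fin n → ℤ, ztranslate u '' P = P

/-- A subset `S ⊆ ℤⁿ` is `d`-sparse if `|S ∩ (u + S)| < d` for every nonzero
`u ∈ ℤⁿ`. -/
def ZSparse (d : ℕ) (S : Set (Fin n → ℤ)) : Prop :=
  ∀ u : Fin n → ℤ, u ≠ 0 → (S ∩ ztranslate u S).encard < d

/-- A `d`-partition of `ℤⁿ`: a collection of at least two subsets, each of
size at least `d`, such that every `d`-element subset of `ℤⁿ` is contained in
exactly one member of the collection. -/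
def IsDPartition (d : ℕ) (P : Set (Set (Fin n → ℤ))) : Prop :=
  2 ≤ P.encard ∧ (∀ S ∈ P, (d : ℕ∞) ≤ S.encard) ∧
    ∀ Y : Set (Fin n → ℤ), Y.encard = d → ∃! S, S ∈ P ∧ Y ⊆ S

/-!
Translation invariance and the uniqueness of the block through a `d`-set show that a translate
`t + S` of a block meeting `S` in at least `d` points equals `S`, i.e. `t` lies in the stabilizer
`L` of `S`. If `S` is not `d`-sparse, `L` is therefore nonzero, hence infinite in the torsion-free
group `ℤⁿ`. For `v, w ∈ S` the infinite set `w + L` then lies in `S ∩ ((w - v) + S)`, so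
`w - v ∈ L` and `S = v + L`. Finally `L ≠ ℤⁿ`, since `S = ℤⁿ` would share `d` points with a
second block.
-/

open Pointwise AddAction

lemma ztranslate_eq_vadd (u : Fin n → ℤ) (S : Set (Fin n → ℤ)) : ztranslate u S = u +ᵥ S := rfl

lemma AddSubgroup.coe_infinite_of_ne_bot {G : Type*} [AddGroup G] [IsAddTorsionFree G]
    {H : AddSubgroup G} (hH : H ≠ ⊥) : (H : Set G).Infinite := by
  obtain ⟨u, hu, hu0⟩ := H.bot_or_exists_ne_zero.resolve_left hH
  exact (infinite_zmultiples.2 ((isOfFinAddOrder_iff_eq_zero u).not.2 hu0)).mono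
    (AddSubgroup.zmultiples_le.2 hu)

lemma eq_vadd_stabilizer_of_infinite_inter {G : Type*} [AddCommGroup G] {S : Set G} {v : G}
    (hv : v ∈ S) (hstab : ∀ t : G, (S ∩ (t +ᵥ S)).Infinite → t ∈ stabilizer G S)
    (hinf : (stabilizer G S : Set G).Infinite) : S = v +ᵥ (stabilizer G S : Set G) := by
  have hmem : ∀ x ∈ S, ∀ l ∈ stabilizer G S, x + l ∈ S := fun x hx l hl => by
    simpa [add_comm] using (mem_stabilizer_set.1 hl x).2 hx
  ext w
  constructor
  · intro hw
    refine ⟨w - v, hstab _ ((hinf.vadd_set (a := w)).mono ?_), by simp⟩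
    rintro _ ⟨l, hl, rfl⟩
    exact ⟨hmem w hw l hl, v + l, hmem v hv l hl, by simp only [vadd_eq_add]; abel⟩
  · rintro ⟨l, hl, rfl⟩
    exact hmem v hv l hl

lemma ZInvariant.vadd_mem {P : Set (Set (Fin n → ℤ))} (hinv : ZInvariant P)
    {S : Set (Fin n → ℤ)} (hS : S ∈ P) (u : Fin n → ℤ) : u +ᵥ S ∈ P :=
  hinv u ▸ mem_image_of_mem _ hS

namespace IsDPartition

variable {d : ℕ} {P : Set (Set (Fin n → ℤ))} {S T : Set (Fin n → ℤ)}

-- For `d = 0` every block contains `∅`, so there is only one block.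
lemma pos (hP : IsDPartition d P) : 0 < d := by
  obtain ⟨hP2, -, hPu⟩ := hP
  refine Nat.pos_of_ne_zero fun hd => ?_
  obtain ⟨T, -, hTu⟩ := hPu ∅ (by simp [hd])
  have hsub : P ⊆ {T} := fun U hU => hTu U ⟨hU, empty_subset _⟩
  have := hP2.trans ((encard_le_encard hsub).trans_eq (encard_singleton T))
  norm_num at this

lemma nonempty (hP : IsDPartition d P) (hS : S ∈ P) : S.Nonempty := by
  rw [← encard_pos]
  exact (Nat.cast_pos.2 hP.pos).trans_le (hP.2.1 S hS)

lemma eq_of_le_encard_inter (hP : IsDPartition d P) (hS : S ∈ P) (hT : T ∈ P)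
    (h : d ≤ (S ∩ T).encard) : S = T := by
  obtain ⟨Y, hYsub, hYcard⟩ := exists_subset_encard_eq h
  obtain ⟨U, -, hUu⟩ := hP.2.2 Y hYcard
  exact (hUu S ⟨hS, hYsub.trans inter_subset_left⟩).trans
    (hUu T ⟨hT, hYsub.trans inter_subset_right⟩).symm

lemma ne_univ (hP : IsDPartition d P) (hS : S ∈ P) : S ≠ univ := by
  rintro rfl
  have hcard : 1 < P.encard := (by norm_num : (1 : ℕ∞) < 2).trans_le hP.1
  obtain ⟨T, hT, hTS⟩ := exists_ne_of_one_lt_encard hcard univ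
  exact hTS (hP.eq_of_le_encard_inter hS hT (by simpa using hP.2.1 T hT)).symm

lemma mem_stabilizer_of_le_encard_inter (hP : IsDPartition d P) (hinv : ZInvariant P)
    (hS : S ∈ P) {t : Fin n → ℤ} (h : d ≤ (S ∩ (t +ᵥ S)).encard) :
    t ∈ stabilizer (Fin n → ℤ) S :=
  mem_stabilizer_iff.2 (hP.eq_of_le_encard_inter hS (hinv.vadd_mem hS t) h).symm

end IsDPartition

/-- Every block of a `ℤⁿ`-invariant `d`-partition of `ℤⁿ` is either `d`-sparse
or a ztranslate `v + L` of a sublattice `L` with `{0} ⊊ L ⊊ ℤⁿ`. -/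
theorem block_sparse_or_affine_sublattice (d : ℕ) (P : Set (Set (Fin n → ℤ)))
    (hP : IsDPartition d P) (hinv : ZInvariant P) (S : Set (Fin n → ℤ))
    (hS : S ∈ P) :
    ZSparse d S ∨ ∃ (v : Fin n → ℤ) (L : AddSubgroup (Fin n → ℤ)),
      L ≠ ⊥ ∧ L ≠ ⊤ ∧ S = ztranslate v (L : Set (Fin n → ℤ)) := by
  by_cases hsparse : ZSparse d S
  · exact Or.inl hsparse
  obtain ⟨u, hu0, hu⟩ : ∃ u : Fin n → ℤ, u ≠ 0 ∧ (d : ℕ∞) ≤ (S ∩ (u +ᵥ S)).encard := by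
    simpa [ZSparse, ztranslate_eq_vadd] using hsparse
  have hstab := fun t => hP.mem_stabilizer_of_le_encard_inter hinv hS (t := t)
  have hne_bot : stabilizer (Fin n → ℤ) S ≠ ⊥ := fun h => hu0 (by simpa [h] using hstab u hu)
  obtain ⟨v, hv⟩ := hP.nonempty hS
  have hcoset := eq_vadd_stabilizer_of_infinite_inter hv
    (fun t ht => hstab t (by rw [ht.encard_eq]; exact le_top))
    (AddSubgroup.coe_infinite_of_ne_bot hne_bot)
  refine Or.inr ⟨v, _, hne_bot, fun htop => hP.ne_univ hS ?_, hcoset⟩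
  rw [hcoset, htop, AddSubgroup.coe_top, vadd_set_univ]
end

section
/- Let P be a Z^n-invariant d-partition of Z^n and S a block of P. Then the stabilizer L = {u in Z^n : u + S = S} equals {u in Z^n : |S ∩ (u + S)| >= d}, and L is a subgroup of Z^n. -/
open Set

variable {n : ℕ}

lemma ztranslate_comp (u v : Fin n → ℤ) (S : Set (Fin n → ℤ)) :
    ztranslate u (ztranslate v S) = ztranslate (u + v) S := by
  simp only [ztranslate, Set.image_image]
  apply Set.image_congr
  intro x _
  rw [add_assoc]

lemma ztranslate_zero (S : Set (Fin n → ℤ)) : ztranslate 0 S = S := by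
  simp [ztranslate]

/-- For a block `S` of a `ℤⁿ`-invariant `d`-partition of `ℤⁿ`, the stabilizer
`{u : u + S = S}` equals `{u : |S ∩ (u + S)| ≥ d}`, and it is a subgroup of
`ℤⁿ`. -/
theorem stabilizer_eq_and_subgroup (d : ℕ) (P : Set (Set (Fin n → ℤ)))
    (hP : IsDPartition d P) (hinv : ZInvariant P) (S : Set (Fin n → ℤ))
    (hS : S ∈ P) :
    {u : Fin n → ℤ | ztranslate u S = S} =
      {u : Fin n → ℤ | (d : ℕ∞) ≤ (S ∩ ztranslate u S).encard} ∧
    ∃ L : AddSubgroup (Fin n → ℤ),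
      (L : Set (Fin n → ℤ)) = {u : Fin n → ℤ | ztranslate u S = S} := by
  obtain ⟨hcard, hsize, huniq⟩ := hP
  constructor
  · ext u
    simp only [Set.mem_setOf_eq]
    constructor
    · intro h
      rw [h, Set.inter_self]
      exact hsize S hS
    · intro h
      obtain ⟨Y, hY, hYcard⟩ := Set.exists_subset_encard_eq h
      have huS : ztranslate u S ∈ P := by
        rw [← hinv u]
        exact Set.mem_image_of_mem _ hS
      obtain ⟨T, _, hT⟩ := huniq Y hYcard
      have h1 := hT (ztranslate u S) ⟨huS, hY.trans Set.inter_subset_right⟩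
      have h2 := hT S ⟨hS, hY.trans Set.inter_subset_left⟩
      rw [h1, h2]
  · refine ⟨{
      carrier := {u : Fin n → ℤ | ztranslate u S = S}
      zero_mem' := ztranslate_zero S
      add_mem' := by
        intro a b ha hb
        simp only [Set.mem_setOf_eq] at *
        rw [← ztranslate_comp, hb, ha]
      neg_mem' := by
        intro a ha
        simp only [Set.mem_setOf_eq] at *
        conv_lhs => rw [← ha]
        rw [ztranslate_comp, neg_add_cancel, ztranslate_zero]
    }, rfl⟩
end

section
/- Suppose A is a collection of subsets of Z^n such that: Z^n is not in A; every A in A has |A| >= d; and whenever A_1, A_2 in A and u in Z^n satisfy |A_1 ∩ (u + A_2)| >= d, we have A_1 = u + A_2. Then the collection P consisting of all translates u + A (u in Z^n, A in A), together with all d-element subsets of Z^n not contained in any such translate, is a Z^n-invariant d-partition of Z^n. -/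
open Set

variable {n : ℕ}

/-!
Two translates `u₁ + A₁`, `u₂ + A₂` sharing `d` points are equal: translating by `-u₁` turns
this into the hypothesis on `A₁` and `(-u₁ + u₂) + A₂`. Hence a `d`-set lies in at most one
translate, and the `d`-sets lying in none are exactly the blocks added by hand. Translations
permute both kinds of blocks. Two distinct blocks exist because a nonempty proper subset of a
group is moved by some translation, and, when `𝒜 = ∅`, because an infinite group has two
different `d`-sets.
-/

open Pointwise

namespace Set

variable {α : Type*}

lemma two_le_encard_of_mem_of_ne {s : Set α} {a b : α} (ha : a ∈ s) (hb : b ∈ s)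
    (hab : a ≠ b) : 2 ≤ s.encard :=
  (encard_pair hab).symm.trans_le (encard_le_encard (pair_subset ha hb))

lemma exists_pair_ne_encard_eq [Infinite α] {d : ℕ} (hd : 1 ≤ d) :
    ∃ D₁ D₂ : Set α, D₁.encard = d ∧ D₂.encard = d ∧ D₁ ≠ D₂ := by
  obtain ⟨D₁, -, hD₁⟩ := exists_subset_encard_eq (s := (univ : Set α)) (k := d) (by simp)
  have hcompl : D₁ᶜ.Infinite := (finite_of_encard_eq_coe hD₁).infinite_compl
  obtain ⟨D₂, hD₂D₁, hD₂⟩ := exists_subset_encard_eq (k := d) (hcompl.encard_eq ▸ le_top)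
  obtain ⟨x, hx⟩ : D₂.Nonempty := by
    rw [← encard_pos, hD₂]
    exact_mod_cast hd
  exact ⟨D₁, D₂, hD₁, hD₂, fun h => hD₂D₁ hx (h ▸ hx)⟩

lemma exists_vadd_set_ne {G : Type*} [AddGroup G] {A : Set G} (hA : A.Nonempty)
    (hA_ne : A ≠ univ) : ∃ u : G, u +ᵥ A ≠ A := by
  obtain ⟨a, ha⟩ := hA
  obtain ⟨x, hx⟩ := (ne_univ_iff_exists_notMem A).mp hA_ne
  have hx_mem : x ∈ (x - a) +ᵥ A := ⟨a, ha, sub_add_cancel x a⟩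
  exact ⟨x - a, fun h => hx (h ▸ hx_mem)⟩

end Set

section GeneratedPartition

variable {G : Type*} [AddGroup G]

def generatedPartition (d : ℕ) (𝒜 : Set (Set G)) : Set (Set G) :=
  {T | ∃ u : G, ∃ A ∈ 𝒜, T = u +ᵥ A} ∪ {D | D.encard = d ∧ ∀ u : G, ∀ A ∈ 𝒜, ¬ D ⊆ u +ᵥ A}

variable {d : ℕ} {𝒜 : Set (Set G)}

lemma vadd_mem_generatedPartition {S : Set G} (hS : S ∈ generatedPartition d 𝒜) (u : G) :
    u +ᵥ S ∈ generatedPartition d 𝒜 := by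
  rcases hS with ⟨v, A, hA, rfl⟩ | ⟨hS_card, hS_free⟩
  · exact Or.inl ⟨u + v, A, hA, vadd_vadd u v A⟩
  · refine Or.inr ⟨(encard_vadd_set u S).trans hS_card, fun v A hA hsub => ?_⟩
    apply hS_free (-u + v) A hA
    simpa only [vadd_vadd, neg_add_cancel, zero_vadd] using vadd_set_mono (a := -u) hsub

lemma image_vadd_generatedPartition (u : G) :
    (u +ᵥ ·) '' generatedPartition d 𝒜 = generatedPartition d 𝒜 :=
  (image_subset_iff.mpr fun _ hS => vadd_mem_generatedPartition hS u).antisymm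
    fun S hS => ⟨-u +ᵥ S, vadd_mem_generatedPartition hS (-u), vadd_neg_vadd u S⟩

lemma le_encard_of_mem_generatedPartition (h𝒜 : ∀ A ∈ 𝒜, (d : ℕ∞) ≤ A.encard) {S : Set G}
    (hS : S ∈ generatedPartition d 𝒜) : (d : ℕ∞) ≤ S.encard := by
  rcases hS with ⟨u, A, hA, rfl⟩ | ⟨hS_card, -⟩
  · exact (h𝒜 A hA).trans_eq (encard_vadd_set u A).symm
  · exact hS_card.ge

lemma two_le_encard_generatedPartition [Infinite G] (hd : 1 ≤ d)
    (huniv : univ ∉ 𝒜) (h𝒜 : ∀ A ∈ 𝒜, (d : ℕ∞) ≤ A.encard) :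
    2 ≤ (generatedPartition d 𝒜).encard := by
  rcases 𝒜.eq_empty_or_nonempty with rfl | ⟨A, hA⟩
  · obtain ⟨D₁, D₂, hD₁, hD₂, hne⟩ := exists_pair_ne_encard_eq (α := G) hd
    exact two_le_encard_of_mem_of_ne (Or.inr ⟨hD₁, by simp⟩) (Or.inr ⟨hD₂, by simp⟩) hne
  · have hA_nonempty : A.Nonempty := by
      rw [← encard_pos]
      exact lt_of_lt_of_le (by exact_mod_cast hd) (h𝒜 A hA)
    obtain ⟨u, hu⟩ := exists_vadd_set_ne hA_nonempty (fun h => huniv (h ▸ hA))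
    exact two_le_encard_of_mem_of_ne (Or.inl ⟨u, A, hA, rfl⟩)
      (Or.inl ⟨0, A, hA, (zero_vadd G A).symm⟩) hu

section Rigid

variable (hrigid : ∀ A₁ ∈ 𝒜, ∀ A₂ ∈ 𝒜, ∀ u : G,
  (d : ℕ∞) ≤ (A₁ ∩ (u +ᵥ A₂)).encard → A₁ = u +ᵥ A₂)
include hrigid

lemma vadd_eq_vadd_of_le_encard_inter {A₁ A₂ : Set G} (hA₁ : A₁ ∈ 𝒜) (hA₂ : A₂ ∈ 𝒜)
    {u₁ u₂ : G} (h : (d : ℕ∞) ≤ ((u₁ +ᵥ A₁) ∩ (u₂ +ᵥ A₂)).encard) :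
    u₁ +ᵥ A₁ = u₂ +ᵥ A₂ := by
  have htranslate : u₁ +ᵥ (A₁ ∩ ((-u₁ + u₂) +ᵥ A₂)) = (u₁ +ᵥ A₁) ∩ (u₂ +ᵥ A₂) := by
    rw [vadd_set_inter, vadd_vadd, add_neg_cancel_left]
  rw [← htranslate, encard_vadd_set] at h
  rw [hrigid A₁ hA₁ A₂ hA₂ _ h, vadd_vadd, add_neg_cancel_left]

lemma eq_of_subset_of_mem_generatedPartition {Y : Set G} (hY : Y.encard = d)
    {S₁ S₂ : Set G} (hS₁ : S₁ ∈ generatedPartition d 𝒜) (hS₂ : S₂ ∈ generatedPartition d 𝒜)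
    (hYS₁ : Y ⊆ S₁) (hYS₂ : Y ⊆ S₂) : S₁ = S₂ := by
  have eq_of_encard_eq {D : Set G} (hD : D.encard = d) (hYD : Y ⊆ D) : Y = D :=
    (finite_of_encard_eq_coe hY).eq_of_subset_of_encard_le hYD (hD.trans hY.symm).le
  rcases hS₁ with ⟨u₁, A₁, hA₁, rfl⟩ | ⟨hS₁_card, hS₁_free⟩ <;>
    rcases hS₂ with ⟨u₂, A₂, hA₂, rfl⟩ | ⟨hS₂_card, hS₂_free⟩
  · exact vadd_eq_vadd_of_le_encard_inter hrigid hA₁ hA₂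
      (hY.ge.trans (encard_le_encard (subset_inter hYS₁ hYS₂)))
  · exact absurd (eq_of_encard_eq hS₂_card hYS₂ ▸ hYS₁) (hS₂_free u₁ A₁ hA₁)
  · exact absurd (eq_of_encard_eq hS₁_card hYS₁ ▸ hYS₂) (hS₁_free u₂ A₂ hA₂)
  · rw [← eq_of_encard_eq hS₁_card hYS₁, ← eq_of_encard_eq hS₂_card hYS₂]

lemma existsUnique_mem_generatedPartition {Y : Set G} (hY : Y.encard = d) :
    ∃! S, S ∈ generatedPartition d 𝒜 ∧ Y ⊆ S := by
  obtain ⟨S, hS, hYS⟩ : ∃ S ∈ generatedPartition d 𝒜, Y ⊆ S := by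
    by_cases hcovered : ∃ u : G, ∃ A ∈ 𝒜, Y ⊆ u +ᵥ A
    · obtain ⟨u, A, hA, hYA⟩ := hcovered
      exact ⟨u +ᵥ A, Or.inl ⟨u, A, hA, rfl⟩, hYA⟩
    · exact ⟨Y, Or.inr ⟨hY, fun u A hA hYA => hcovered ⟨u, A, hA, hYA⟩⟩, subset_rfl⟩
  exact ⟨S, ⟨hS, hYS⟩, fun T hT =>
    eq_of_subset_of_mem_generatedPartition hrigid hY hT.1 hS hT.2 hYS⟩

end Rigid

end GeneratedPartition

/-- If `𝒜` is a collection of subsets of `ℤⁿ` (with `n ≥ 1`, `d ≥ 1`) such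
that `ℤⁿ ∉ 𝒜`, every member of `𝒜` has at least `d` elements, and any two
translates of members of `𝒜` sharing at least `d` elements are equal, then the
collection of all translates of members of `𝒜`, together with all `d`-element
subsets of `ℤⁿ` contained in no such translate, is a `ℤⁿ`-invariant
`d`-partition of `ℤⁿ`. -/
theorem generated_dPartition (d : ℕ) (hd : 1 ≤ d) (hn : 1 ≤ n)
    (𝒜 : Set (Set (Fin n → ℤ)))
    (hA1 : (univ : Set (Fin n → ℤ)) ∉ 𝒜)
    (hA2 : ∀ A ∈ 𝒜, (d : ℕ∞) ≤ A.encard)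
    (hA3 : ∀ A₁ ∈ 𝒜, ∀ A₂ ∈ 𝒜, ∀ u : Fin n → ℤ,
      (d : ℕ∞) ≤ (A₁ ∩ ztranslate u A₂).encard → A₁ = ztranslate u A₂) :
    IsDPartition d
      ({T | ∃ u : Fin n → ℤ, ∃ A ∈ 𝒜, T = ztranslate u A} ∪
        {D | D.encard = d ∧ ∀ u : Fin n → ℤ, ∀ A ∈ 𝒜, ¬ D ⊆ ztranslate u A}) ∧
    ZInvariant
      ({T | ∃ u : Fin n → ℤ, ∃ A ∈ 𝒜, T = ztranslate u A} ∪
        {D | D.encard = d ∧ ∀ u : Fin n → ℤ, ∀ A ∈ 𝒜, ¬ D ⊆ ztranslate u A}) := by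
  have : Nonempty (Fin n) := ⟨⟨0, hn⟩⟩
  -- `ztranslate u` is definitionally `(u +ᵥ ·)` on `Set (Fin n → ℤ)`
  change IsDPartition d (generatedPartition d 𝒜) ∧ ZInvariant (generatedPartition d 𝒜)
  exact ⟨⟨two_le_encard_generatedPartition hd hA1 hA2,
      fun S hS => le_encard_of_mem_generatedPartition hA2 hS,
      fun Y hY => existsUnique_mem_generatedPartition hA3 hY⟩,
    image_vadd_generatedPartition⟩
end
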